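/- Define A_m(u, θ) := Σ_{k=0}^{⌊m/2⌋} D_m^k (1-θ)^k u^{m-2k}, where D_m^k = m!/((m-2k)!·2^k·k!). Then for every natural number n, every real u and every real θ > 0, the combined shift-and-scale identity holds: H_n((x - u)/√θ) = θ^{-n/2} · Σ_{k=0}^{n} (-1)^{n-k} C(n,k) · H_k(x) · A_{n-k}(u, θ). -/

import Mathlib

/-! Write `Heₙ⁽ˢ⁾` for the probabilists' Hermite polynomials of variance `s`, determined by
`Heₙ₊₁⁽ˢ⁾(a) = a Heₙ⁽ˢ⁾(a) - n s Heₙ₋₁⁽ˢ⁾(a)`. Rescaling gives `θ^(n/2) Heₙ(y/√θ) = Heₙ⁽ᶿ⁾(y)`.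
Formally `A_m(u, θ) = E[(u + √(1-θ) Z)^m]` for a standard Gaussian `Z`: it is the binomial
convolution of the Gaussian moments of variance `1 - θ` with the powers of `u`, hence
`A_m(u, θ) = Heₘ⁽ᶿ⁻¹⁾(u)`. Binomial convolution adds both the arguments and the variances (on
exponential generating functions it multiplies the `exp(a z - s z²/2)`), which is checked on the
recurrence: the index shift and the multiplication by the index act on convolutions as `d/dz` and
`z·` act on products. Convolving `Heₖ(x)` with `(-1)^m A_m(u, θ) = Heₘ⁽ᶿ⁻¹⁾(-u)` therefore gives
`Heₙ⁽ᶿ⁾(x - u)`.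
-/

open Nat Polynomial

/-- `D m k = m!/((m-2k)! 2^k k!)`. -/
def D (m k : ℕ) : ℕ := m ! / ((m - 2 * k)! * 2 ^ k * k !)

/-- `A m u θ = ∑_{k ≤ ⌊m/2⌋} D_m^k (1-θ)^k u^{m-2k}`. -/
noncomputable def A (m : ℕ) (u θ : ℝ) : ℝ :=
  ∑ k ∈ Finset.range (m / 2 + 1), (D m k : ℝ) * (1 - θ) ^ k * u ^ (m - 2 * k)

open Finset

section CommRing

variable {R : Type*} [CommRing R]

/-- `f n = f 0 · Heₙ⁽ˢ⁾(a)`, for the probabilists' Hermite polynomials `Heₙ⁽ˢ⁾` of variance `s`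
(`Heₙ⁽ˢ⁾(x) = s^(n/2) Heₙ(x/√s)` when `s > 0`). -/
def IsHermiteSeq (a s : R) (f : ℕ → R) : Prop :=
  f 1 = a * f 0 ∧ ∀ n : ℕ, f (n + 2) = a * f (n + 1) - (n + 1) * s * f n

namespace IsHermiteSeq

variable {a b s t : R} {f g : ℕ → R}

theorem succ_eq (hf : IsHermiteSeq a s f) (n : ℕ) :
    f (n + 1) = a * f n - n * s * f (n - 1) := by
  cases n with
  | zero => simpa using hf.1
  | succ n => simpa using hf.2 n

theorem of_succ_eq (h : ∀ n : ℕ, f (n + 1) = a * f n - n * s * f (n - 1)) :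
    IsHermiteSeq a s f :=
  ⟨by simpa using h 0, fun n => by simpa using h (n + 1)⟩

theorem eq_of_eq_zero (hf : IsHermiteSeq a s f) (hg : IsHermiteSeq a s g) (h0 : f 0 = g 0) :
    f = g := by
  funext n
  induction n using Nat.twoStepInduction with
  | zero => exact h0
  | one => rw [hf.1, hg.1, h0]
  | more n ih0 ih1 => rw [hf.2, hg.2, ih0, ih1]

theorem pow_mul (hf : IsHermiteSeq a s f) (c : R) :
    IsHermiteSeq (c * a) (c ^ 2 * s) (fun n => c ^ n * f n) :=
  ⟨by simp [hf.1]; ring, fun n => by simp only [hf.2 n]; ring⟩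

theorem neg_one_pow_mul (hf : IsHermiteSeq a s f) :
    IsHermiteSeq (-a) s (fun n => (-1) ^ n * f n) := by
  simpa using hf.pow_mul (-1)

end IsHermiteSeq

theorem isHermiteSeq_pow (u : R) : IsHermiteSeq u 0 (u ^ ·) :=
  ⟨by simp, fun n => by ring⟩

theorem Polynomial.derivative_hermite_succ (n : ℕ) :
    derivative (hermite (n + 1)) = (n + 1 : ℤ[X]) * hermite n := by
  induction n with
  | zero => simp [hermite_zero]
  | succ n ih =>
    rw [hermite_succ (n + 1), derivative_sub, derivative_mul, derivative_X, one_mul, ih,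
      derivative_mul, derivative_add, derivative_natCast, derivative_one, hermite_succ n]
    push_cast
    ring

theorem Polynomial.hermite_add_two (n : ℕ) :
    hermite (n + 2) = X * hermite (n + 1) - (n + 1 : ℤ[X]) * hermite n := by
  rw [hermite_succ (n + 1), derivative_hermite_succ]

theorem isHermiteSeq_hermite (y : R) :
    IsHermiteSeq y 1 (fun n => ((hermite n).map (Int.castRingHom R)).eval y) :=
  ⟨by simp [hermite_zero], fun n => by
    simp only [hermite_add_two, Polynomial.map_sub, Polynomial.map_mul, Polynomial.map_add,
      Polynomial.map_X, Polynomial.map_natCast, Polynomial.map_one, eval_sub, eval_mul, eval_X,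
      eval_add, eval_natCast, eval_one, mul_one]⟩

def binomConv (f g : ℕ → R) (n : ℕ) : R :=
  ∑ p ∈ antidiagonal n, (n.choose p.1 : R) * (f p.1 * g p.2)

theorem binomConv_comm (f g : ℕ → R) : binomConv f g = binomConv g f := by
  funext n
  rw [binomConv, binomConv, ← Nat.sum_antidiagonal_swap]
  refine sum_congr rfl fun p hp => ?_
  rw [Nat.choose_symm_of_eq_add (mem_antidiagonal.mp hp).symm]
  simp only [Prod.fst_swap, Prod.snd_swap]
  ring

theorem binomConv_succ (f g : ℕ → R) (n : ℕ) :
    binomConv f g (n + 1) =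
      binomConv f (fun j => g (j + 1)) n + binomConv (fun i => f (i + 1)) g n := by
  rw [binomConv, sum_antidiagonal_choose_succ_mul (fun i j => f i * g j)]
  congr 1
  refine sum_congr rfl fun p hp => ?_
  rw [Nat.choose_symm_of_eq_add (mem_antidiagonal.mp hp).symm]

theorem binomConv_mul_pred (f g : ℕ → R) (n : ℕ) :
    binomConv f (fun j => j * g (j - 1)) n = n * binomConv f g (n - 1) := by
  cases n with
  | zero => simp [binomConv]
  | succ n =>
    rw [binomConv, Nat.sum_antidiagonal_succ', binomConv, mul_sum]
    simp only [Nat.cast_zero, zero_mul, mul_zero, zero_add, Nat.add_sub_cancel]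
    refine sum_congr rfl fun p hp => ?_
    have hchoose : (n + 1).choose p.1 * (p.2 + 1) = (n + 1) * n.choose p.1 := by
      have := Nat.choose_mul_succ_eq n p.1
      rw [show n + 1 - p.1 = p.2 + 1 by have := mem_antidiagonal.mp hp; omega] at this
      rw [mul_comm (n + 1), this]
    have hchoose' : ((n + 1).choose p.1 : R) * (p.2 + 1) = (n + 1) * n.choose p.1 := by
      simpa using congrArg (Nat.cast : ℕ → R) hchoose
    push_cast
    linear_combination (f p.1 * g p.2) * hchoose'

theorem binomConv_succ_right {b t : R} {g : ℕ → R} (hg : IsHermiteSeq b t g) (f : ℕ → R)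
    (n : ℕ) : binomConv f (fun j => g (j + 1)) n =
      b * binomConv f g n - n * t * binomConv f g (n - 1) := by
  calc binomConv f (fun j => g (j + 1)) n
      = b * binomConv f g n - t * binomConv f (fun j => j * g (j - 1)) n := by
        simp only [binomConv, hg.succ_eq, mul_sum, ← sum_sub_distrib]
        exact sum_congr rfl fun p _ => by ring
    _ = b * binomConv f g n - n * t * binomConv f g (n - 1) := by
        rw [binomConv_mul_pred]
        ring

theorem IsHermiteSeq.binomConv {a b s t : R} {f g : ℕ → R} (hf : IsHermiteSeq a s f)
    (hg : IsHermiteSeq b t g) : IsHermiteSeq (a + b) (s + t) (binomConv f g) := by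
  refine .of_succ_eq fun n => ?_
  rw [binomConv_succ, binomConv_succ_right hg, binomConv_comm (fun i => f (i + 1)),
    binomConv_succ_right hf, binomConv_comm g]
  ring

/-- The moments `E[(√c Z)^j]` of a centred Gaussian of variance `c`. -/
def gaussMoment (c : R) : ℕ → R
  | 0 => 1
  | 1 => 0
  | j + 2 => (j + 1) * c * gaussMoment c j

theorem isHermiteSeq_gaussMoment (c : R) : IsHermiteSeq 0 (-c) (gaussMoment c) :=
  ⟨by simp [gaussMoment], fun n => by simp [gaussMoment]⟩

theorem gaussMoment_two_mul (c : R) (k : ℕ) : gaussMoment c (2 * k) = c ^ k * (2 * k - 1)‼ := by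
  induction k with
  | zero => simp [gaussMoment]
  | succ k ih =>
    rw [show 2 * (k + 1) = 2 * k + 2 by ring, gaussMoment, ih,
      show 2 * k + 2 - 1 = 2 * k + 1 by omega, Nat.doubleFactorial_add_one]
    push_cast
    ring

theorem gaussMoment_two_mul_add_one (c : R) (k : ℕ) : gaussMoment c (2 * k + 1) = 0 := by
  induction k with
  | zero => simp [gaussMoment]
  | succ k ih => rw [show 2 * (k + 1) + 1 = 2 * k + 1 + 2 by ring, gaussMoment, ih, mul_zero]

end CommRing

theorem Nat.factorial_two_mul (k : ℕ) : (2 * k)! = 2 ^ k * k ! * (2 * k - 1)‼ := by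
  cases k with
  | zero => rfl
  | succ k =>
    rw [show 2 * (k + 1) = 2 * k + 1 + 1 by ring, Nat.factorial_eq_mul_doubleFactorial,
      show 2 * k + 1 + 1 = 2 * (k + 1) by ring, Nat.doubleFactorial_two_mul,
      show 2 * (k + 1) - 1 = 2 * k + 1 by omega]

theorem D_eq_choose_mul_doubleFactorial {m k : ℕ} (hk : 2 * k ≤ m) :
    D m k = m.choose (2 * k) * (2 * k - 1)‼ := by
  refine Nat.div_eq_of_eq_mul_left (by positivity) ?_
  rw [← Nat.choose_mul_factorial_mul_factorial hk, Nat.factorial_two_mul]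
  ring

theorem A_eq_binomConv (m : ℕ) (u θ : ℝ) :
    A m u θ = binomConv (gaussMoment (1 - θ)) (u ^ ·) m := by
  set F : ℕ → ℝ := fun j => m.choose j * (gaussMoment (1 - θ) j * u ^ (m - j))
  have hA : A m u θ = ∑ k ∈ range (m / 2 + 1), F (2 * k) := by
    refine sum_congr rfl fun k hk => ?_
    have hk : 2 * k ≤ m := by rw [mem_range] at hk; omega
    simp only [F, D_eq_choose_mul_doubleFactorial hk, gaussMoment_two_mul]
    push_cast
    ring
  rw [hA, binomConv, Nat.sum_antidiagonal_eq_sum_range_succ_mk,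
    ← sum_image fun _ _ _ _ h => by omega]
  refine sum_subset (fun j => by simp; omega) fun j hjm hj => ?_
  obtain ⟨k, rfl⟩ : ∃ k, j = 2 * k + 1 := by
    simp only [mem_image, mem_range, not_exists, not_and] at hj hjm
    have := hj (j / 2)
    exact ⟨j / 2, by omega⟩
  simp [F, gaussMoment_two_mul_add_one]

theorem isHermiteSeq_A (u θ : ℝ) : IsHermiteSeq u (θ - 1) (fun m => A m u θ) := by
  rw [show (fun m => A m u θ) = binomConv (gaussMoment (1 - θ)) (u ^ ·) from
    funext fun m => A_eq_binomConv m u θ]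
  simpa using (isHermiteSeq_gaussMoment (1 - θ)).binomConv (isHermiteSeq_pow u)

theorem hermite_shift_scale (n : ℕ) (u θ : ℝ) (hθ : 0 < θ) (x : ℝ) :
    ((hermite n).map (Int.castRingHom ℝ)).eval ((x - u) / Real.sqrt θ) =
      θ ^ (-(n : ℝ) / 2) *
        ∑ k ∈ Finset.range (n + 1),
          (-1 : ℝ) ^ (n - k) * (n.choose k : ℝ) *
            ((hermite k).map (Int.castRingHom ℝ)).eval x * A (n - k) u θ := by
  have hsqrt : Real.sqrt θ ≠ 0 := (Real.sqrt_pos.mpr hθ).ne'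
  have hscaled : IsHermiteSeq (x - u) θ fun k =>
      Real.sqrt θ ^ k * ((hermite k).map (Int.castRingHom ℝ)).eval ((x - u) / Real.sqrt θ) := by
    simpa [mul_div_cancel₀ _ hsqrt, Real.sq_sqrt hθ.le] using
      (isHermiteSeq_hermite ((x - u) / Real.sqrt θ)).pow_mul (Real.sqrt θ)
  have hconv : IsHermiteSeq (x - u) θ (binomConv (fun k => ((hermite k).map
      (Int.castRingHom ℝ)).eval x) fun m => (-1) ^ m * A m u θ) := by
    simpa [sub_eq_add_neg] using
      (isHermiteSeq_hermite x).binomConv (isHermiteSeq_A u θ).neg_one_pow_mul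
  have hagree := congr_fun (hscaled.eq_of_eq_zero hconv (by simp [binomConv, hermite_zero, A, D])) n
  have hpow : θ ^ (-(n : ℝ) / 2) = (Real.sqrt θ ^ n)⁻¹ := by
    rw [Real.sqrt_eq_rpow, ← Real.rpow_natCast, ← Real.rpow_mul hθ.le, ← Real.rpow_neg hθ.le]
    ring_nf
  rw [hpow, eq_inv_mul_iff_mul_eq₀ (pow_ne_zero _ hsqrt), hagree, binomConv,
    Nat.sum_antidiagonal_eq_sum_range_succ_mk]
  exact sum_congr rfl fun k _ => by ring
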